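/- In any measurable spined category, the triangulation functor and the chordal triangulation functor coincide: Δ[X] = Δ^ch[X] for every object X. -/

import Mathlib

open CategoryTheory

universe u v

/-- The data of a spine and proxy pushout operation on a category. -/
structure SpineData (C : Type u) [Category.{v} C] where
  /-- the spine, a functor from the discrete category ℕ -/
  Ω : ℕ → C
  /-- proxy pushout object of a span out of a spine object -/
  P : ∀ {n : ℕ} {G H : C}, (Ω n ⟶ G) → (Ω n ⟶ H) → C
  /-- left structure morphism of the proxy pushout cocone -/
  inl : ∀ {n : ℕ} {G H : C} (g : Ω n ⟶ G) (h : Ω n ⟶ H), G ⟶ P g h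
  /-- right structure morphism of the proxy pushout cocone -/
  inr : ∀ {n : ℕ} {G H : C} (g : Ω n ⟶ G) (h : Ω n ⟶ H), H ⟶ P g h

variable {C : Type u} [Category.{v} C]

/-- (SC1): every object admits a morphism to some spine object. -/
def SpineData.SC1 (D : SpineData C) : Prop :=
  ∀ X : C, ∃ n : ℕ, Nonempty (X ⟶ D.Ω n)

/-- (SC2): unique compatibility morphisms between proxy pushouts of extended spans. -/
def SpineData.SC2 (D : SpineData C) : Prop :=
  ∀ {n : ℕ} {G H G' H' : C} (g : D.Ω n ⟶ G) (h : D.Ω n ⟶ H) (g' : G ⟶ G') (h' : H ⟶ H'),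
    ∃! m : D.P g h ⟶ D.P (g ≫ g') (h ≫ h'),
      D.inl g h ≫ m = g' ≫ D.inl (g ≫ g') (h ≫ h') ∧
      D.inr g h ≫ m = h' ≫ D.inr (g ≫ g') (h ≫ h')

/-- A spined category is a category equipped with spine data satisfying SC1 and SC2. -/
def SpineData.IsSpined (D : SpineData C) : Prop := D.SC1 ∧ D.SC2

/-- An S-functor over a spined category `(C, Ω, 𝔓)`: a spinal functor to the spined
category `Nat` (the poset `(ℕ, ≤)` with spine `n ↦ n` and proxy pushouts given by maxima).
Equivalently: a monotone map preserving the spine and proxy pushouts. -/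
structure SFunctor (D : SpineData C) where
  val : C → ℕ
  mono : ∀ {X Y : C}, (X ⟶ Y) → val X ≤ val Y
  spine : ∀ n : ℕ, val (D.Ω n) = n
  pp : ∀ {n : ℕ} {G H : C} (g : D.Ω n ⟶ G) (h : D.Ω n ⟶ H),
    val (D.P g h) = max (val G) (val H)

/-- An object is pseudo-chordal if all S-functors agree on it. -/
def PseudoChordal (D : SpineData C) (X : C) : Prop :=
  ∀ F G : SFunctor D, F.val X = G.val X

/-- The chordal objects: the smallest collection of objects containing the spine and
closed under proxy pushouts. -/
inductive Chordal (D : SpineData C) : C → Prop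
  | spine (n : ℕ) : Chordal D (D.Ω n)
  | push {n : ℕ} {A B : C} (a : D.Ω n ⟶ A) (b : D.Ω n ⟶ B) :
      Chordal D A → Chordal D B → Chordal D (D.P a b)

/-- The set of widths of pseudo-chordal completions of `X`: `k` is such a width
iff there is a morphism `X ⟶ H` with `H` pseudo-chordal and every S-functor takes
the value `k` on `H`. -/
def pcWidths (D : SpineData C) (X : C) : Set ℕ :=
  {k | ∃ H : C, Nonempty (X ⟶ H) ∧ PseudoChordal D H ∧ ∀ F : SFunctor D, F.val H = k}

/-- The set of widths of chordal completions of `X`. -/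
def chWidths (D : SpineData C) (X : C) : Set ℕ :=
  {k | ∃ H : C, Nonempty (X ⟶ H) ∧ Chordal D H ∧ ∀ F : SFunctor D, F.val H = k}

/-- The triangulation number: minimum width of a pseudo-chordal completion. -/
noncomputable def tri (D : SpineData C) (X : C) : ℕ := sInf (pcWidths D X)

/-- The chordal triangulation number: minimum width of a chordal completion. -/
noncomputable def triCh (D : SpineData C) (X : C) : ℕ := sInf (chWidths D X)

/-- The order of an object: least `n` admitting a morphism `X ⟶ Ω n`. -/
noncomputable def ordOf (D : SpineData C) (X : C) : ℕ := sInf {n : ℕ | Nonempty (X ⟶ D.Ω n)}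

/-!
The chordal triangulation number `triCh` is itself an S-functor: composing a morphism with a
chordal completion makes it monotone, `Ω n` is its own chordal completion and every completion
of `Ω n` has width at least `n`, and (SC2) glues chordal completions of the two legs of a span
into a chordal completion of its proxy pushout. Chordal objects are pseudo-chordal, so
`tri ≤ triCh`. Conversely, if `X ⟶ H` is an optimal pseudo-chordal completion then the
S-functor `triCh` takes the common value `tri X` on `H`, whence `triCh X ≤ triCh H = tri X`.
-/

theorem Chordal.pseudoChordal {D : SpineData C} {X : C} (h : Chordal D X) :
    PseudoChordal D X := by
  intro F G
  induction h with
  | spine n => rw [F.spine, G.spine]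
  | push a b _ _ ihA ihB => rw [F.pp, G.pp, ihA, ihB]

theorem SFunctor.val_le_of_mem_chWidths {D : SpineData C} (F : SFunctor D) {X : C} {k : ℕ}
    (hk : k ∈ chWidths D X) : F.val X ≤ k :=
  let ⟨_, ⟨f⟩, _, hval⟩ := hk
  hval F ▸ F.mono f

namespace SpineData

theorem chWidths_subset_pcWidths (D : SpineData C) (X : C) : chWidths D X ⊆ pcWidths D X :=
  fun _ ⟨H, f, hH, hval⟩ => ⟨H, f, hH.pseudoChordal, hval⟩

theorem spine_mem_chWidths_of_hom (D : SpineData C) {X : C} {n : ℕ} (f : X ⟶ D.Ω n) : n ∈ chWidths D X :=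
  ⟨D.Ω n, ⟨f⟩, Chordal.spine n, fun F => F.spine n⟩

theorem SC1.chWidths_nonempty {D : SpineData C} (h1 : D.SC1) (X : C) :
    (chWidths D X).Nonempty :=
  let ⟨n, ⟨f⟩⟩ := h1 X
  ⟨n, D.spine_mem_chWidths_of_hom f⟩

theorem SC1.triCh_mem_chWidths {D : SpineData C} (h1 : D.SC1) (X : C) :
    triCh D X ∈ chWidths D X :=
  Nat.sInf_mem (h1.chWidths_nonempty X)

theorem triCh_le_of_hom_of_mem_chWidths (D : SpineData C) {X Y : C} (f : X ⟶ Y) {k : ℕ}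
    (hk : k ∈ chWidths D Y) : triCh D X ≤ k :=
  let ⟨H, ⟨g⟩, hH, hval⟩ := hk
  Nat.sInf_le ⟨H, ⟨f ≫ g⟩, hH, hval⟩

theorem SC1.triCh_mono {D : SpineData C} (h1 : D.SC1) {X Y : C} (f : X ⟶ Y) :
    triCh D X ≤ triCh D Y :=
  D.triCh_le_of_hom_of_mem_chWidths f (h1.triCh_mem_chWidths Y)

theorem triCh_spine (D : SpineData C) (F : SFunctor D) (n : ℕ) : triCh D (D.Ω n) = n := by
  have hmem : n ∈ chWidths D (D.Ω n) := D.spine_mem_chWidths_of_hom (𝟙 _)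
  exact le_antisymm (Nat.sInf_le hmem)
    (le_csInf ⟨n, hmem⟩ fun _ hk => F.spine n ▸ F.val_le_of_mem_chWidths hk)

theorem IsSpined.triCh_pp {D : SpineData C} (hD : D.IsSpined) {n : ℕ} {G H : C}
    (g : D.Ω n ⟶ G) (h : D.Ω n ⟶ H) :
    triCh D (D.P g h) = max (triCh D G) (triCh D H) := by
  refine le_antisymm ?_ (max_le (hD.1.triCh_mono (D.inl g h)) (hD.1.triCh_mono (D.inr g h)))
  obtain ⟨A, ⟨g'⟩, hA, hvalA⟩ := hD.1.triCh_mem_chWidths G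
  obtain ⟨B, ⟨h'⟩, hB, hvalB⟩ := hD.1.triCh_mem_chWidths H
  obtain ⟨m, -, -⟩ := hD.2 g h g' h'
  refine Nat.sInf_le ⟨D.P (g ≫ g') (h ≫ h'), ⟨m⟩, Chordal.push _ _ hA hB, fun F => ?_⟩
  rw [F.pp, hvalA F, hvalB F]

noncomputable def IsSpined.triChSFunctor {D : SpineData C} (hD : D.IsSpined) (F : SFunctor D) :
    SFunctor D where
  val := triCh D
  mono := hD.1.triCh_mono
  spine := D.triCh_spine F
  pp := hD.triCh_pp

end SpineData

/-- in any measurable spined category the triangulation functor and the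
chordal triangulation functor coincide. -/
theorem tri_eq_triCh
    {C : Type u} [Category.{v} C] (D : SpineData C) (hD : D.IsSpined)
    (hmeas : Nonempty (SFunctor D)) :
    ∀ X : C, tri D X = triCh D X := by
  intro X
  obtain ⟨F⟩ := hmeas
  have hch := hD.1.triCh_mem_chWidths X
  refine le_antisymm (Nat.sInf_le (D.chWidths_subset_pcWidths X hch)) ?_
  obtain ⟨H, ⟨f⟩, -, hval⟩ := Nat.sInf_mem ⟨_, D.chWidths_subset_pcWidths X hch⟩
  calc triCh D X ≤ triCh D H := hD.1.triCh_mono f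
    _ = tri D X := hval (hD.triChSFunctor F)
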